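/- For the Lie algebra g = s_{3,3}^0 × s_{3,3}^0 with structure equations (e^{23}, -e^{13}, 0, e^{56}, -e^{46}, 0), the endomorphism J with J e1 = e2, J e3 = e6, J e4 = e5 (and J² = -Id, so J e2 = -e1, J e6 = -e3, J e5 = -e4) is integrable and its Koszul 1-form is ψ = ±2 e^3 ± 2 e^6; in particular ψ(e1) = ψ(e2) = ψ(e4) = ψ(e5) = 0 and |ψ(e3)| = |ψ(e6)| = 2, so ψ vanishes on [g,g] = span{e1,e2,e4,e5} but ψ ≠ 0. -/
import Mathlib


namespace Stmt12

abbrev V : Type := Fin 6 → ℝ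

/-- standard basis -/
noncomputable def e (i : Fin 6) : V := Pi.single i 1

/-- the Lie bracket -/
def br (x y : V) : V := fun k =>
  match k with
  | 0 => -(x 1 * y 2 - x 2 * y 1)
  | 1 => x 0 * y 2 - x 2 * y 0
  | 2 => 0
  | 3 => -(x 4 * y 5 - x 5 * y 4)
  | 4 => x 3 * y 5 - x 5 * y 3
  | 5 => 0

/-- the adjoint operator `ad x = [x, ·]` as a linear endomorphism -/
noncomputable def ad (x : V) : V →ₗ[ℝ] V where
  toFun := br x
  map_add' := by intro a b; funext k; fin_cases k <;> simp [br] <;> ring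
  map_smul' := by intro c a; funext k; fin_cases k <;> simp [br] <;> ring

/-- the Nijenhuis tensor of an endomorphism `J` -/
noncomputable def nijenhuis (J : V →ₗ[ℝ] V) (x y : V) : V :=
  br x y + J (br (J x) y + br x (J y)) - br (J x) (J y)

/-- the Koszul 1-form `ψ(x) = Tr(J ∘ ad x) - Tr(ad (J x))` -/
noncomputable def psi (J : V →ₗ[ℝ] V) (x : V) : ℝ :=
  LinearMap.trace ℝ V (J ∘ₗ ad x) - LinearMap.trace ℝ V (ad (J x))

noncomputable def Jmap : V →ₗ[ℝ] V where
  toFun x := fun k =>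
    match k with
    | 0 => -x 1
    | 1 => x 0
    | 2 => -x 5
    | 3 => -x 4
    | 4 => x 3
    | 5 => x 2
  map_add' := by intro a b; funext k; fin_cases k <;> simp <;> ring
  map_smul' := by intro c a; funext k; fin_cases k <;> simp <;> ring

lemma Jmap_apply (x : V) (k : Fin 6) : Jmap x k =
    (match k with
    | 0 => -x 1
    | 1 => x 0
    | 2 => -x 5
    | 3 => -x 4
    | 4 => x 3
    | 5 => x 2 : ℝ) := rfl

lemma trace_eq (f : V →ₗ[ℝ] V) :
    LinearMap.trace ℝ V f = ∑ i : Fin 6, f (e i) i := by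
  rw [LinearMap.trace_eq_matrix_trace ℝ (Pi.basisFun ℝ (Fin 6)) f]
  simp [Matrix.trace, Matrix.diag, LinearMap.toMatrix_apply, e]

lemma psi_eq (J : V →ₗ[ℝ] V) (x : V) :
    psi J x = (∑ i : Fin 6, J (ad x (e i)) i) - ∑ i : Fin 6, ad (J x) (e i) i := by
  simp [psi, trace_eq]

/-- on `s_{3,3}^0 × s_{3,3}^0` the structure `J e1 = e2, J e3 = e6, J e4 = e5`
is integrable with Koszul form `ψ(e3) = 2, ψ(e6) = 2`, `ψ = 0` on the other basis vectors;
in particular `ψ` vanishes on `[g,g]` but `ψ ≠ 0`. -/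
theorem stmt_12 :
    ∃ J : V →ₗ[ℝ] V,
      J (e 0) = e 1 ∧ J (e 1) = -e 0 ∧ J (e 2) = e 5 ∧ J (e 5) = -e 2 ∧
      J (e 3) = e 4 ∧ J (e 4) = -e 3 ∧
      (∀ x : V, J (J x) = -x) ∧
      (∀ x y : V, nijenhuis J x y = 0) ∧
      psi J (e 2) = 2 ∧ psi J (e 5) = 2 ∧
      psi J (e 0) = 0 ∧ psi J (e 1) = 0 ∧ psi J (e 3) = 0 ∧ psi J (e 4) = 0 ∧
      (∀ x y : V, psi J (br x y) = 0) := by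
  refine ⟨Jmap, ?_, ?_, ?_, ?_, ?_, ?_, ?_, ?_, ?_, ?_, ?_, ?_, ?_, ?_, ?_⟩
  · funext k; fin_cases k <;> simp [Jmap_apply, e, Pi.single_apply]
  · funext k; fin_cases k <;> simp [Jmap_apply, e, Pi.single_apply]
  · funext k; fin_cases k <;> simp [Jmap_apply, e, Pi.single_apply]
  · funext k; fin_cases k <;> simp [Jmap_apply, e, Pi.single_apply]
  · funext k; fin_cases k <;> simp [Jmap_apply, e, Pi.single_apply]
  · funext k; fin_cases k <;> simp [Jmap_apply, e, Pi.single_apply]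
  · intro x; funext k; fin_cases k <;> simp [Jmap_apply]
  · intro x y; funext k; fin_cases k <;>
      simp [nijenhuis, br, Jmap_apply] <;> ring
  · rw [psi_eq]
    simp [Fin.sum_univ_six, ad, br, Jmap_apply, e, Pi.single_apply]
    norm_num
  · rw [psi_eq]
    simp [Fin.sum_univ_six, ad, br, Jmap_apply, e, Pi.single_apply]
    norm_num
  · rw [psi_eq]
    simp [Fin.sum_univ_six, ad, br, Jmap_apply, e, Pi.single_apply]
  · rw [psi_eq]
    simp [Fin.sum_univ_six, ad, br, Jmap_apply, e, Pi.single_apply]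
  · rw [psi_eq]
    simp [Fin.sum_univ_six, ad, br, Jmap_apply, e, Pi.single_apply]
  · rw [psi_eq]
    simp [Fin.sum_univ_six, ad, br, Jmap_apply, e, Pi.single_apply]
  · intro x y; rw [psi_eq]
    simp [Fin.sum_univ_six, ad, br, Jmap_apply, e, Pi.single_apply]

end Stmt12
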